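/- Explicit objective-gap bound (Proposition 3, explicit form): Let (u*, v*) be a global minimizer of Ψ over ℝ^n × ℝ^m, let c_{μν} = min( min_{i∈I} μ_i , min_{j∈J} ν_j ), set A = ‖C‖_∞/η + log( max(n, m)/c_{μν}² ), and assume ‖u*‖_∞ ≤ A, ‖v*‖_∞ ≤ A, and max(n, m)·ε² ≥ c_{μν}. Then Ψ_κ(u^sc, v^sc) − Ψ(u*, v*) ≤ 2·( A + ‖u^sc‖_∞ + ‖v^sc‖_∞ + log( max(n, m)·ε²/c_{μν} ) )·( ‖μ^sc − μ‖₁ + ‖ν^sc − ν‖₁ ) + |1 − κ|·( ‖u^sc‖_∞·‖μ^sc‖₁ + ‖μ^sc − μ‖₁ ) + |1 − 1/κ|·( ‖v^sc‖_∞·‖ν^sc‖₁ + ‖ν^sc − ν‖₁ ), where ‖C‖_∞ is the maximum entry of C in absolute value, ‖·‖_∞ the sup norm on vectors, and ‖·‖₁ the ℓ1 norm. -/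

import Mathlib

open scoped Classical

/-!
Write `Ψ_κ(u, v) = Ψ(u, v) + (1 - κ) ⟨u, μ⟩ + (1 - 1/κ) ⟨v, ν⟩`. The dual objective `Ψ` is convex
with gradient `(μ^sc - μ, ν^sc - ν)` at the screened point, so
`Ψ(u^sc, v^sc) - Ψ(u*, v*) ≤ ⟨u^sc - u*, μ^sc - μ⟩ + ⟨v^sc - v*, ν^sc - ν⟩`, which Hölder bounds by
`(‖u^sc‖∞ + A) ‖μ^sc - μ‖₁ + (‖v^sc‖∞ + A) ‖ν^sc - ν‖₁`.

For the two `κ`-terms, optimality of the screened point against increasing a single coordinate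
gives `κ μ ≤ μ^sc` and `ν / κ ≤ ν^sc`: on the active sets this is the one-sided first-order
condition, off them it is the screening threshold. This controls whichever of the two terms has a
coefficient of modulus larger than one; the other one is bounded through
`‖μ‖₁ ≤ ‖μ^sc‖₁ + ‖μ^sc - μ‖₁`. All remaining terms of the bound are nonnegative.
-/

section

open Real Finset Function

variable {ι ι' : Type*} [Fintype ι] [Fintype ι']

theorem le_mul_exp_of_isMinOn {ρ b t : ℝ} (h : IsMinOn (fun x ↦ ρ * exp x - b * x) (Set.Ici t) t) :
    b ≤ ρ * exp t := by
  have hderiv : HasDerivAt (fun x ↦ ρ * exp x - b * x) (ρ * exp t - b) t := by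
    have h := ((hasDerivAt_exp t).const_mul ρ).sub ((hasDerivAt_id' t).const_mul b)
    rwa [mul_one] at h
  have hcone : (1 : ℝ) ∈ posTangentConeAt (Set.Ici t) t :=
    mem_posTangentConeAt_of_segment_subset <| by
      rw [segment_eq_Icc (by linarith)]; exact Set.Icc_subset_Ici_self
  simpa using h.localize.hasFDerivWithinAt_nonneg hderiv.hasFDerivAt.hasFDerivWithinAt hcone

theorem sum_apply_update {M β : Type*} [AddCommGroup M] [DecidableEq ι] (g : ι → β → M)
    (u : ι → β) (i : ι) (x : β) :
    ∑ k, g k (update u i x k) = ∑ k, g k (u k) + (g i x - g i (u i)) := by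
  rw [← sub_eq_iff_eq_add', ← sum_sub_distrib, sum_eq_single i]
  · simp
  · intro k _ hk; simp [hk]
  · simp

theorem abs_sum_mul_le_norm_mul_sum {p : ι → ℝ} (hp : ∀ i, 0 ≤ p i) (u : ι → ℝ) :
    |∑ i, u i * p i| ≤ ‖u‖ * ∑ i, p i := by
  rw [mul_sum]
  refine (abs_sum_le_sum_abs _ _).trans (sum_le_sum fun i _ ↦ ?_)
  rw [abs_mul, abs_of_nonneg (hp i), ← Real.norm_eq_abs]
  exact mul_le_mul_of_nonneg_right (norm_le_pi_norm u i) (hp i)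

theorem mul_sum_mul_le_abs_mul_norm_mul_sum {p : ι → ℝ} (hp : ∀ i, 0 ≤ p i) (c : ℝ)
    (u : ι → ℝ) : c * ∑ i, u i * p i ≤ |c| * (‖u‖ * ∑ i, p i) := by
  calc c * ∑ i, u i * p i ≤ |c| * |∑ i, u i * p i| := by rw [← abs_mul]; exact le_abs_self _
    _ ≤ |c| * (‖u‖ * ∑ i, p i) := by gcongr; exact abs_sum_mul_le_norm_mul_sum hp u

theorem sum_le_sum_abs_add_sum_abs_sub (p q : ι → ℝ) :
    ∑ i, p i ≤ ∑ i, |q i| + ∑ i, |q i - p i| := by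
  rw [← sum_add_distrib]
  exact sum_le_sum fun i _ ↦ by linarith [le_abs_self (q i), neg_abs_le (q i - p i)]

theorem one_sub_mul_sum_mul_le {t : ℝ} (ht : 0 < t) {p q : ι → ℝ} (hp : ∀ i, 0 ≤ p i)
    (hq : ∀ i, t * p i ≤ q i) (u : ι → ℝ) :
    (1 - t) * ∑ i, u i * p i ≤ |1 - 1 / t| * (‖u‖ * ∑ i, |q i|) := by
  calc (1 - t) * ∑ i, u i * p i = (1 / t - 1) * ∑ i, u i * (t * p i) := by
        simp_rw [mul_left_comm _ t, ← mul_sum]; field_simp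
    _ ≤ |1 / t - 1| * (‖u‖ * ∑ i, t * p i) :=
        mul_sum_mul_le_abs_mul_norm_mul_sum (fun i ↦ mul_nonneg ht.le (hp i)) _ u
    _ ≤ |1 - 1 / t| * (‖u‖ * ∑ i, |q i|) := by
        rw [abs_sub_comm]; gcongr with i; exact (hq i).trans (le_abs_self _)

theorem mul_sum_mul_le_of_abs_le_one {c : ℝ} (hc : |c| ≤ 1) {p : ι → ℝ} (hp : ∀ i, 0 ≤ p i)
    (q u : ι → ℝ) :
    c * ∑ i, u i * p i ≤ |c| * (‖u‖ * ∑ i, |q i|) + ‖u‖ * ∑ i, |q i - p i| := by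
  have hΔ : |c| * (‖u‖ * ∑ i, |q i - p i|) ≤ ‖u‖ * ∑ i, |q i - p i| :=
    mul_le_of_le_one_left (by positivity) hc
  calc c * ∑ i, u i * p i ≤ |c| * (‖u‖ * ∑ i, p i) := mul_sum_mul_le_abs_mul_norm_mul_sum hp c u
    _ ≤ |c| * (‖u‖ * (∑ i, |q i| + ∑ i, |q i - p i|)) := by
        gcongr; exact sum_le_sum_abs_add_sum_abs_sub p q
    _ ≤ _ := by rw [mul_add, mul_add]; linarith

theorem abs_one_sub_one_div_le_abs_one_sub {t : ℝ} (ht : 1 ≤ t) : |1 - 1 / t| ≤ |1 - t| := by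
  have : 1 / t ≤ 1 := by rw [div_le_one (by linarith)]; exact ht
  rw [abs_of_nonneg (by linarith), abs_of_nonpos (by linarith), one_sub_div (by positivity),
    div_le_iff₀ (by positivity)]
  nlinarith

theorem abs_one_sub_one_div_le_one {t : ℝ} (ht : 1 ≤ t) : |1 - 1 / t| ≤ 1 := by
  have h0 : 0 < 1 / t := by positivity
  have h1 : 1 / t ≤ 1 := by rw [div_le_one (by linarith)]; exact ht
  rw [abs_le]; constructor <;> linarith

theorem one_sub_mul_add_one_sub_one_div_mul_le_of_one_le {t : ℝ} (ht : 1 ≤ t)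
    {p q : ι → ℝ} {p' q' : ι' → ℝ} (hp : ∀ i, 0 ≤ p i) (hp' : ∀ j, 0 ≤ p' j)
    (hq : ∀ i, t * p i ≤ q i) (u : ι → ℝ) (v : ι' → ℝ) :
    (1 - t) * ∑ i, u i * p i + (1 - 1 / t) * ∑ j, v j * p' j
      ≤ |1 - t| * (‖u‖ * ∑ i, |q i|) + |1 - 1 / t| * (‖v‖ * ∑ j, |q' j|)
        + ‖v‖ * ∑ j, |q' j - p' j| := by
  have hu := one_sub_mul_sum_mul_le (by linarith) hp hq u
  have hv := mul_sum_mul_le_of_abs_le_one (abs_one_sub_one_div_le_one ht) hp' q' v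
  have hcmp : |1 - 1 / t| * (‖u‖ * ∑ i, |q i|) ≤ |1 - t| * (‖u‖ * ∑ i, |q i|) :=
    mul_le_mul_of_nonneg_right (abs_one_sub_one_div_le_abs_one_sub ht) (by positivity)
  linarith

theorem one_sub_mul_add_one_sub_one_div_mul_le {t : ℝ} (ht : 0 < t)
    {p q : ι → ℝ} {p' q' : ι' → ℝ} (hp : ∀ i, 0 ≤ p i) (hp' : ∀ j, 0 ≤ p' j)
    (hq : ∀ i, t * p i ≤ q i) (hq' : ∀ j, 1 / t * p' j ≤ q' j) (u : ι → ℝ) (v : ι' → ℝ) :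
    (1 - t) * ∑ i, u i * p i + (1 - 1 / t) * ∑ j, v j * p' j
      ≤ |1 - t| * (‖u‖ * ∑ i, |q i|) + |1 - 1 / t| * (‖v‖ * ∑ j, |q' j|)
        + ‖u‖ * ∑ i, |q i - p i| + ‖v‖ * ∑ j, |q' j - p' j| := by
  have hΔu : 0 ≤ ‖u‖ * ∑ i, |q i - p i| := by positivity
  have hΔv : 0 ≤ ‖v‖ * ∑ j, |q' j - p' j| := by positivity
  rcases le_or_gt 1 t with ht1 | ht1
  · linarith [one_sub_mul_add_one_sub_one_div_mul_le_of_one_le ht1 hp hp' hq u v (q' := q')]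
  · have h := one_sub_mul_add_one_sub_one_div_mul_le_of_one_le (t := 1 / t)
      (by rw [le_div_iff₀ ht]; linarith) hp' hp hq' v u (q' := q)
    rw [one_div_one_div] at h
    linarith

theorem sum_sub_mul_sub_le (u u' p q : ι → ℝ) :
    ∑ i, (u i - u' i) * (q i - p i) ≤ (‖u‖ + ‖u'‖) * ∑ i, |q i - p i| := by
  rw [mul_sum]
  refine sum_le_sum fun i _ ↦ (le_abs_self _).trans ?_
  rw [abs_mul]
  gcongr
  calc |u i - u' i| ≤ |u i| + |u' i| := abs_sub _ _
    _ ≤ ‖u‖ + ‖u'‖ := by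
        simp only [← Real.norm_eq_abs]
        exact add_le_add (norm_le_pi_norm u i) (norm_le_pi_norm u' i)

/-- `dualObjective K μ ν κ (1 / κ)` is `Ψ_κ` and `dualObjective K μ ν 1 1` is `Ψ`. -/
noncomputable def dualObjective (K : ι → ι' → ℝ) (μ : ι → ℝ) (ν : ι' → ℝ) (a b : ℝ) (u : ι → ℝ)
    (v : ι' → ℝ) : ℝ :=
  ∑ i, ∑ j, exp (u i) * K i j * exp (v j) - a * ∑ i, u i * μ i - b * ∑ j, v j * ν j

theorem dualObjective_transpose (K : ι → ι' → ℝ) (μ : ι → ℝ) (ν : ι' → ℝ) (a b : ℝ)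
    (u : ι → ℝ) (v : ι' → ℝ) :
    dualObjective (fun j i ↦ K i j) ν μ b a v u = dualObjective K μ ν a b u v := by
  have hB : ∑ i, ∑ j, exp (v j) * K i j * exp (u i) = ∑ i, ∑ j, exp (u i) * K i j * exp (v j) :=
    sum_congr rfl fun i _ ↦ sum_congr rfl fun j _ ↦ by ring
  unfold dualObjective
  rw [sum_comm, hB]
  ring

theorem dualObjective_update [DecidableEq ι] (K : ι → ι' → ℝ) (μ : ι → ℝ) (ν : ι' → ℝ)
    (a b : ℝ) (u : ι → ℝ) (v : ι' → ℝ) (i : ι) (x : ℝ) :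
    dualObjective K μ ν a b (update u i x) v
      = dualObjective K μ ν a b u v + (exp x - exp (u i)) * ∑ j, K i j * exp (v j)
        - a * μ i * (x - u i) := by
  have hrow : ∑ j, exp x * K i j * exp (v j) - ∑ j, exp (u i) * K i j * exp (v j)
      = (exp x - exp (u i)) * ∑ j, K i j * exp (v j) := by
    rw [← sum_sub_distrib, mul_sum]; exact sum_congr rfl fun j _ ↦ by ring
  unfold dualObjective
  rw [sum_apply_update (fun k y ↦ ∑ j, exp y * K k j * exp (v j)),
    sum_apply_update (fun k y ↦ y * μ k)]
  linear_combination hrow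

theorem dualObjective_sub_le_sum_mul_marginal_sub {K : ι → ι' → ℝ} (hK : ∀ i j, 0 ≤ K i j)
    (μ : ι → ℝ) (ν : ι' → ℝ) (u u' : ι → ℝ) (v v' : ι' → ℝ) :
    dualObjective K μ ν 1 1 u v - dualObjective K μ ν 1 1 u' v'
      ≤ ∑ i, (u i - u' i) * (∑ j, exp (u i) * K i j * exp (v j) - μ i)
        + ∑ j, (v j - v' j) * (∑ i, exp (u i) * K i j * exp (v j) - ν j) := by
  have hterm : ∀ i j, (1 + (u' i - u i) + (v' j - v j)) * (exp (u i) * K i j * exp (v j))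
      ≤ exp (u' i) * K i j * exp (v' j) := fun i j ↦ by
    have h := add_one_le_exp ((u' i - u i) + (v' j - v j))
    have hB : 0 ≤ exp (u i) * K i j * exp (v j) := by have := hK i j; positivity
    calc (1 + (u' i - u i) + (v' j - v j)) * (exp (u i) * K i j * exp (v j))
        ≤ exp ((u' i - u i) + (v' j - v j)) * (exp (u i) * K i j * exp (v j)) :=
          mul_le_mul_of_nonneg_right (by linarith) hB
      _ = K i j * exp (u i + ((u' i - u i) + (v' j - v j)) + v j) := by
          rw [exp_add (u i + _), exp_add (u i)]; ring
      _ = exp (u' i) * K i j * exp (v' j) := by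
          rw [show u i + ((u' i - u i) + (v' j - v j)) + v j = u' i + v' j by ring, exp_add]; ring
  have hsum := sum_le_sum fun i (_ : i ∈ univ) ↦ sum_le_sum fun j (_ : j ∈ univ) ↦ hterm i j
  unfold dualObjective
  simp only [add_mul, one_mul, sub_mul, mul_sub, sum_add_distrib, sum_sub_distrib, mul_sum]
    at hsum ⊢
  rw [sum_comm (f := fun i j ↦ v' j * (exp (u i) * K i j * exp (v j))),
    sum_comm (f := fun i j ↦ v j * (exp (u i) * K i j * exp (v j)))] at hsum
  linarith

theorem mul_le_sum_of_le_dualObjective_update [DecidableEq ι] {K : ι → ι' → ℝ} {μ : ι → ℝ}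
    {ν : ι' → ℝ} {a b : ℝ} {u : ι → ℝ} {v : ι' → ℝ} {i : ι}
    (h : ∀ x, u i ≤ x → dualObjective K μ ν a b u v ≤ dualObjective K μ ν a b (update u i x) v) :
    a * μ i ≤ ∑ j, exp (u i) * K i j * exp (v j) := by
  have hmin : IsMinOn (fun x ↦ (∑ j, K i j * exp (v j)) * exp x - a * μ i * x)
      (Set.Ici (u i)) (u i) := isMinOn_iff.2 fun x hx ↦ by
    have := h x hx
    rw [dualObjective_update] at this
    linarith
  calc a * μ i ≤ (∑ j, K i j * exp (v j)) * exp (u i) := le_mul_exp_of_isMinOn hmin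
    _ = ∑ j, exp (u i) * K i j * exp (v j) := by
        rw [sum_mul]; exact sum_congr rfl fun j _ ↦ by ring

theorem mul_le_rowSum_of_screened_minimizer {K : ι → ι' → ℝ} (hK : ∀ i j, 0 ≤ K i j)
    {μ : ι → ℝ} {ν : ι' → ℝ} {a b l l' : ℝ} (hl' : 0 ≤ l') {I : Finset ι} {u : ι → ℝ}
    {v : ι' → ℝ} (hu : ∀ i, l ≤ exp (u i)) (hv : ∀ j, l' ≤ exp (v j))
    (hu_out : ∀ i ∉ I, u i = log l)
    (hinactive : ∀ i ∉ I, a * μ i ≤ l * l' * ∑ j, K i j)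
    (hmin : ∀ u' : ι → ℝ, (∀ i, l ≤ exp (u' i)) → (∀ i ∉ I, u' i = log l) →
      dualObjective K μ ν a b u v ≤ dualObjective K μ ν a b u' v)
    (i : ι) : a * μ i ≤ ∑ j, exp (u i) * K i j * exp (v j) := by
  by_cases hi : i ∈ I
  · refine mul_le_sum_of_le_dualObjective_update fun x hx ↦ hmin _ (fun k ↦ ?_) fun k hk ↦ ?_
    · rcases eq_or_ne k i with rfl | hk
      · simpa using (hu k).trans (exp_le_exp.2 hx)
      · simpa [hk] using hu k
    · rw [update_of_ne (ne_of_mem_of_not_mem hi hk).symm]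
      exact hu_out k hk
  · calc a * μ i ≤ l * l' * ∑ j, K i j := hinactive i hi
      _ ≤ ∑ j, exp (u i) * K i j * exp (v j) := by
        rw [mul_sum]
        refine sum_le_sum fun j _ ↦ ?_
        nlinarith [mul_nonneg (sub_nonneg.2 (hu i)) (mul_nonneg hl' (hK i j)),
          mul_nonneg (mul_nonneg (exp_pos (u i)).le (hK i j)) (sub_nonneg.2 (hv j))]

theorem mul_le_colSum_of_screened_minimizer {K : ι → ι' → ℝ} (hK : ∀ i j, 0 ≤ K i j)
    {μ : ι → ℝ} {ν : ι' → ℝ} {a b l l' : ℝ} (hl : 0 ≤ l) {J : Finset ι'} {u : ι → ℝ}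
    {v : ι' → ℝ} (hu : ∀ i, l ≤ exp (u i)) (hv : ∀ j, l' ≤ exp (v j))
    (hv_out : ∀ j ∉ J, v j = log l')
    (hinactive : ∀ j ∉ J, b * ν j ≤ l' * l * ∑ i, K i j)
    (hmin : ∀ v' : ι' → ℝ, (∀ j, l' ≤ exp (v' j)) → (∀ j ∉ J, v' j = log l') →
      dualObjective K μ ν a b u v ≤ dualObjective K μ ν a b u v')
    (j : ι') : b * ν j ≤ ∑ i, exp (u i) * K i j * exp (v j) := by
  have h := mul_le_rowSum_of_screened_minimizer (K := fun j i ↦ K i j) (μ := ν) (ν := μ) (a := b)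
    (b := a) (fun j i ↦ hK i j) hl hv hu hv_out hinactive
    (fun v' hv' hv'_out ↦ by simpa only [dualObjective_transpose] using hmin v' hv' hv'_out) j
  exact h.trans_eq (sum_congr rfl fun i _ ↦ by ring)

end

theorem explicit_objective_gap_bound_general
    (n m : ℕ)
    (C : Fin n → Fin m → ℝ)
    (η : ℝ)
    (K : Fin n → Fin m → ℝ) (hK : ∀ i j, K i j = Real.exp (-(C i j) / η))
    (μ : Fin n → ℝ) (ν : Fin m → ℝ)
    (hμpos : ∀ i, 0 < μ i) (hνpos : ∀ j, 0 < ν j)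
    (ε κ : ℝ) (hε : 0 < ε) (hκ : 0 < κ)
    (I : Finset (Fin n)) (hI : ∀ i, i ∈ I ↔ ε ^ 2 / κ * (∑ j, K i j) ≤ μ i)
    (J : Finset (Fin m)) (hJ : ∀ j, j ∈ J ↔ κ * ε ^ 2 * (∑ i, K i j) ≤ ν j)
    (usc : Fin n → ℝ) (vsc : Fin m → ℝ)
    (husc_feas : ∀ i, ε / κ ≤ Real.exp (usc i))
    (hvsc_feas : ∀ j, ε * κ ≤ Real.exp (vsc j))
    (husc_out : ∀ i ∉ I, usc i = Real.log (ε / κ))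
    (hvsc_out : ∀ j ∉ J, vsc j = Real.log (ε * κ))
    (hsc_min : ∀ (u : Fin n → ℝ) (v : Fin m → ℝ),
      (∀ i, ε / κ ≤ Real.exp (u i)) → (∀ j, ε * κ ≤ Real.exp (v j)) →
      (∀ i ∉ I, u i = Real.log (ε / κ)) → (∀ j ∉ J, v j = Real.log (ε * κ)) →
      (∑ i, ∑ j, Real.exp (usc i) * K i j * Real.exp (vsc j))
          - κ * (∑ i, usc i * μ i) - (1 / κ) * (∑ j, vsc j * ν j)
        ≤ (∑ i, ∑ j, Real.exp (u i) * K i j * Real.exp (v j))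
          - κ * (∑ i, u i * μ i) - (1 / κ) * (∑ j, v j * ν j))
    (μsc : Fin n → ℝ)
    (hμsc : ∀ i, μsc i = ∑ j, Real.exp (usc i) * K i j * Real.exp (vsc j))
    (νsc : Fin m → ℝ)
    (hνsc : ∀ j, νsc j = ∑ i, Real.exp (usc i) * K i j * Real.exp (vsc j))
    (ustar : Fin n → ℝ) (vstar : Fin m → ℝ)
    (μminI νminJ : ℝ)
    (hμminI : (∃ i ∈ I, μ i = μminI) ∧ ∀ i ∈ I, μminI ≤ μ i)
    (hνminJ : (∃ j ∈ J, ν j = νminJ) ∧ ∀ j ∈ J, νminJ ≤ ν j)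
    (A : ℝ)
    (hustarA : ‖ustar‖ ≤ A) (hvstarA : ‖vstar‖ ≤ A)
    (hcεbound : min μminI νminJ ≤ (max n m : ℝ) * ε ^ 2) :
    ((∑ i, ∑ j, Real.exp (usc i) * K i j * Real.exp (vsc j))
        - κ * (∑ i, usc i * μ i) - (1 / κ) * (∑ j, vsc j * ν j))
      - ((∑ i, ∑ j, Real.exp (ustar i) * K i j * Real.exp (vstar j))
        - (∑ i, ustar i * μ i) - (∑ j, vstar j * ν j))
    ≤ 2 * (A + ‖usc‖ + ‖vsc‖ + Real.log ((max n m : ℝ) * ε ^ 2 / min μminI νminJ)) *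
        ((∑ i, |μsc i - μ i|) + (∑ j, |νsc j - ν j|))
      + |1 - κ| * (‖usc‖ * (∑ i, |μsc i|) + (∑ i, |μsc i - μ i|))
      + |1 - 1 / κ| * (‖vsc‖ * (∑ j, |νsc j|) + (∑ j, |νsc j - ν j|)) := by
  have hK0 : ∀ i j, 0 ≤ K i j := fun i j ↦ (hK i j).symm ▸ (Real.exp_pos _).le
  have hrow : ∀ i, κ * μ i ≤ μsc i := fun i ↦ (hμsc i).symm ▸
    mul_le_rowSum_of_screened_minimizer hK0 (by positivity) husc_feas hvsc_feas husc_out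
      (fun i hi ↦ by have := not_le.1 (mt (hI i).2 hi); field_simp at this ⊢; linarith)
      (fun u hu hu_out ↦ hsc_min u vsc hu hvsc_feas hu_out hvsc_out) i
  have hcol : ∀ j, 1 / κ * ν j ≤ νsc j := fun j ↦ (hνsc j).symm ▸
    mul_le_colSum_of_screened_minimizer hK0 (by positivity) husc_feas hvsc_feas hvsc_out
      (fun j hj ↦ by have := not_le.1 (mt (hJ j).2 hj); field_simp at this ⊢; linarith)
      (fun v hv hv_out ↦ hsc_min usc v husc_feas hv husc_out hv_out) j
  have hgap := dualObjective_sub_le_sum_mul_marginal_sub hK0 μ ν usc ustar vsc vstar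
  simp only [dualObjective, one_mul, ← hμsc, ← hνsc] at hgap
  have hu := sum_sub_mul_sub_le usc ustar μ μsc
  have hv := sum_sub_mul_sub_le vsc vstar ν νsc
  have hκ_terms := one_sub_mul_add_one_sub_one_div_mul_le hκ (fun i ↦ (hμpos i).le)
    (fun j ↦ (hνpos j).le) hrow hcol usc vsc
  have hc : 0 < min μminI νminJ := by
    obtain ⟨⟨i, -, rfl⟩, -⟩ := hμminI
    obtain ⟨⟨j, -, rfl⟩, -⟩ := hνminJ
    exact lt_min (hμpos i) (hνpos j)
  have hL := Real.log_nonneg ((one_le_div hc).2 hcεbound)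
  have hA := (norm_nonneg ustar).trans hustarA
  have hΔμ : 0 ≤ ∑ i, |μsc i - μ i| := by positivity
  have hΔν : 0 ≤ ∑ j, |νsc j - ν j| := by positivity
  have hS : ∑ i, μsc i = ∑ i, ∑ j, Real.exp (usc i) * K i j * Real.exp (vsc j) :=
    Finset.sum_congr rfl fun i _ ↦ hμsc i
  linarith [mul_le_mul_of_nonneg_right hustarA hΔμ, mul_le_mul_of_nonneg_right hvstarA hΔν,
    mul_nonneg hA hΔμ, mul_nonneg hA hΔν, mul_nonneg hL hΔμ, mul_nonneg hL hΔν,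
    mul_nonneg (norm_nonneg usc) hΔν, mul_nonneg (norm_nonneg vsc) hΔμ,
    mul_nonneg (abs_nonneg (1 - κ)) hΔμ, mul_nonneg (abs_nonneg (1 - 1 / κ)) hΔν]

theorem explicit_objective_gap_bound
    (n m : ℕ) (hn : 0 < n) (hm : 0 < m)
    (C : Fin n → Fin m → ℝ) (hC : ∀ i j, 0 ≤ C i j)
    (η : ℝ) (hη : 0 < η)
    (K : Fin n → Fin m → ℝ) (hK : ∀ i j, K i j = Real.exp (-(C i j) / η))
    (μ : Fin n → ℝ) (ν : Fin m → ℝ)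
    (hμpos : ∀ i, 0 < μ i) (hνpos : ∀ j, 0 < ν j)
    (hμsum : ∑ i, μ i = 1) (hνsum : ∑ j, ν j = 1)
    (ε κ : ℝ) (hε : 0 < ε) (hκ : 0 < κ)
    (I : Finset (Fin n)) (hI : ∀ i, i ∈ I ↔ ε ^ 2 / κ * (∑ j, K i j) ≤ μ i)
    (J : Finset (Fin m)) (hJ : ∀ j, j ∈ J ↔ κ * ε ^ 2 * (∑ i, K i j) ≤ ν j)
    (hIne : I.Nonempty) (hJne : J.Nonempty)
    (Kmin : ℝ) (hKmin_le : ∀ i j, Kmin ≤ K i j) (hKmin_mem : ∃ i j, K i j = Kmin)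
    (usc : Fin n → ℝ) (vsc : Fin m → ℝ)
    (husc_feas : ∀ i, ε / κ ≤ Real.exp (usc i))
    (hvsc_feas : ∀ j, ε * κ ≤ Real.exp (vsc j))
    (husc_out : ∀ i ∉ I, usc i = Real.log (ε / κ))
    (hvsc_out : ∀ j ∉ J, vsc j = Real.log (ε * κ))
    (hsc_min : ∀ (u : Fin n → ℝ) (v : Fin m → ℝ),
      (∀ i, ε / κ ≤ Real.exp (u i)) → (∀ j, ε * κ ≤ Real.exp (v j)) →
      (∀ i ∉ I, u i = Real.log (ε / κ)) → (∀ j ∉ J, v j = Real.log (ε * κ)) →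
      (∑ i, ∑ j, Real.exp (usc i) * K i j * Real.exp (vsc j))
          - κ * (∑ i, usc i * μ i) - (1 / κ) * (∑ j, vsc j * ν j)
        ≤ (∑ i, ∑ j, Real.exp (u i) * K i j * Real.exp (v j))
          - κ * (∑ i, u i * μ i) - (1 / κ) * (∑ j, v j * ν j))
    (hactive_u : ∀ i ∈ I, ε / κ < Real.exp (usc i))
    (hactive_v : ∀ j ∈ J, ε * κ < Real.exp (vsc j))
    (μsc : Fin n → ℝ)
    (hμsc : ∀ i, μsc i = ∑ j, Real.exp (usc i) * K i j * Real.exp (vsc j))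
    (νsc : Fin m → ℝ)
    (hνsc : ∀ j, νsc j = ∑ i, Real.exp (usc i) * K i j * Real.exp (vsc j))
    (ustar : Fin n → ℝ) (vstar : Fin m → ℝ)
    (hstar_min : ∀ (u : Fin n → ℝ) (v : Fin m → ℝ),
      (∑ i, ∑ j, Real.exp (ustar i) * K i j * Real.exp (vstar j))
          - (∑ i, ustar i * μ i) - (∑ j, vstar j * ν j)
        ≤ (∑ i, ∑ j, Real.exp (u i) * K i j * Real.exp (v j))
          - (∑ i, u i * μ i) - (∑ j, v j * ν j))
    (μminI νminJ : ℝ)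
    (hμminI : (∃ i ∈ I, μ i = μminI) ∧ ∀ i ∈ I, μminI ≤ μ i)
    (hνminJ : (∃ j ∈ J, ν j = νminJ) ∧ ∀ j ∈ J, νminJ ≤ ν j)
    (Cmax : ℝ) (hCmax_ub : ∀ i j, |C i j| ≤ Cmax) (hCmax_mem : ∃ i j, |C i j| = Cmax)
    (A : ℝ) (hA : A = Cmax / η + Real.log ((max n m : ℝ) / (min μminI νminJ) ^ 2))
    (hustarA : ‖ustar‖ ≤ A) (hvstarA : ‖vstar‖ ≤ A)
    (hcεbound : min μminI νminJ ≤ (max n m : ℝ) * ε ^ 2) :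
    ((∑ i, ∑ j, Real.exp (usc i) * K i j * Real.exp (vsc j))
        - κ * (∑ i, usc i * μ i) - (1 / κ) * (∑ j, vsc j * ν j))
      - ((∑ i, ∑ j, Real.exp (ustar i) * K i j * Real.exp (vstar j))
        - (∑ i, ustar i * μ i) - (∑ j, vstar j * ν j))
    ≤ 2 * (A + ‖usc‖ + ‖vsc‖ + Real.log ((max n m : ℝ) * ε ^ 2 / min μminI νminJ)) *
        ((∑ i, |μsc i - μ i|) + (∑ j, |νsc j - ν j|))
      + |1 - κ| * (‖usc‖ * (∑ i, |μsc i|) + (∑ i, |μsc i - μ i|))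
      + |1 - 1 / κ| * (‖vsc‖ * (∑ j, |νsc j|) + (∑ j, |νsc j - ν j|)) :=
  explicit_objective_gap_bound_general n m C η K hK μ ν hμpos hνpos ε κ hε hκ I hI J hJ usc vsc
    husc_feas hvsc_feas husc_out hvsc_out hsc_min μsc hμsc νsc hνsc ustar vstar μminI νminJ hμminI
    hνminJ A hustarA hvstarA hcεbound
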